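/- If ν is uniformly transverse on Ω with constant κ, i.e., ∫_{π[x,y]} sin α(x−y,H) dν(H) ≥ κ ν(π[x,y]) for all x,y ∈ Ω, then f_ν is bi-Lipschitz from (Ω, d_ν) to ℝⁿ: κ d_ν(x,y) ≤ |f_ν(x) − f_ν(y)| ≤ d_ν(x,y) for all x,y ∈ Ω. -/

import Mathlib

open MeasureTheory Set

noncomputable section

/-- Euclidean space `ℝⁿ`. -/
abbrev Euc (n : ℕ) := EuclideanSpace ℝ (Fin n)

/-- The space of affine hyperplanes in `ℝⁿ`, encoded as pairs `(v, c)` with `‖v‖ = 1`,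
representing the hyperplane `{x : ⟪x, v⟫ = c}`. -/
abbrev Hyp (n : ℕ) := {p : Euc n × ℝ // ‖p.1‖ = 1}

/-- The hyperplane determined by `H`, as a subset of `ℝⁿ`. -/
def hset {n : ℕ} (H : Hyp n) : Set (Euc n) := {x | (inner ℝ x H.1.1 : ℝ) = H.1.2}

/-- `meets A = π A`: the set of hyperplanes intersecting `A`. -/
def meets {n : ℕ} (A : Set (Euc n)) : Set (Hyp n) := {H | (hset H ∩ A).Nonempty}

/-- The unit normal of `H` pointing out of the halfspace containing the basepoint `o`. -/
def nrm {n : ℕ} (o : Euc n) (H : Hyp n) : Euc n :=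
  if (inner ℝ o H.1.1 : ℝ) < H.1.2 then H.1.1 else -H.1.1

/-- `fnu ν o x = ∫_{π[o,x]} n(H) dν(H)`. -/
def fnu {n : ℕ} (ν : Measure (Hyp n)) (o : Euc n) (x : Euc n) : Euc n :=
  ∫ H in meets (segment ℝ o x), nrm o H ∂ν

/-- `sin α(v, H) = |⟪v, n(H)⟫| / |v|`, the sine of the angle between the line of `v`
and the hyperplane `H`. -/
def sinA {n : ℕ} (v : Euc n) (H : Hyp n) : ℝ := |(inner ℝ v H.1.1 : ℝ)| / ‖v‖

/-
For ν-a.e. hyperplane `H` (one missing `o`, `x` and `y`), `H` meets exactly one of `[o, x]` and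
`[o, y]` if and only if it separates `x` from `y`, and the signed term `±n(H)` it contributes to
`f_ν(x) - f_ν(y)` is the unit normal of `H` pointing away from `y`. Hence
`f_ν(x) - f_ν(y) = ∫_{π[x,y]} n_y(H) dν(H)`, an integral of unit vectors over a set of measure
`d_ν(x, y)`, which gives the upper bound. Pairing with `x - y` turns the integrand into
`|⟪x - y, n(H)⟫| = ‖x - y‖ sin α(x - y, H)`, so Cauchy–Schwarz and transversality give the lower
bound.
-/

section

variable {n : ℕ}

def sdist (p : Euc n) (H : Hyp n) : ℝ := inner ℝ p H.1.1 - H.1.2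

lemma continuous_sdist (p : Euc n) : Continuous (sdist p) :=
  (continuous_const.inner continuous_subtype_val.fst).sub continuous_subtype_val.snd

lemma sdist_lineMap (x y : Euc n) (H : Hyp n) (t : ℝ) :
    sdist (AffineMap.lineMap x y t) H = AffineMap.lineMap (sdist x H) (sdist y H) t := by
  simp only [sdist, AffineMap.lineMap_apply_module, inner_add_left, real_inner_smul_left,
    smul_eq_mul]
  ring

lemma exists_mem_Icc_lineMap_eq_zero_iff {a b : ℝ} :
    (∃ t ∈ Icc (0 : ℝ) 1, AffineMap.lineMap a b t = 0) ↔ a * b ≤ 0 := by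
  constructor
  · rintro ⟨t, ⟨ht0, ht1⟩, ht⟩
    rw [AffineMap.lineMap_apply_module, smul_eq_mul, smul_eq_mul] at ht
    by_contra! hab
    nlinarith [congrArg (a * ·) ht, congrArg (b * ·) ht, mul_nonneg ht0 hab.le,
      mul_nonneg (sub_nonneg.2 ht1) hab.le, mul_nonneg (sub_nonneg.2 ht1) (sq_nonneg a),
      mul_nonneg ht0 (sq_nonneg b)]
  · intro hab
    have h0 : (0 : ℝ) ∈ uIcc a b := by
      rcases mul_nonpos_iff.1 hab with h | h
      · exact mem_uIcc.2 (Or.inr ⟨h.2, h.1⟩)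
      · exact mem_uIcc.2 (Or.inl h)
    obtain ⟨t, ht, ht0⟩ := intermediate_value_uIcc (a := (0 : ℝ)) (b := 1)
      (AffineMap.lineMap_continuous (p := a) (q := b)).continuousOn
      (by simpa only [AffineMap.lineMap_apply_zero, AffineMap.lineMap_apply_one] using h0)
    exact ⟨t, by simpa only [uIcc_of_le zero_le_one] using ht, ht0⟩

lemma meets_segment (x y : Euc n) :
    meets (segment ℝ x y) = {H | sdist x H * sdist y H ≤ 0} := by
  ext H
  simp only [meets, segment_eq_image_lineMap, mem_ofPred_eq, ← exists_mem_Icc_lineMap_eq_zero_iff,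
    ← sdist_lineMap]
  simp [hset, sdist, sub_eq_zero, inter_nonempty, and_comm]

lemma measurableSet_meets_segment (x y : Euc n) : MeasurableSet (meets (segment ℝ x y)) := by
  rw [meets_segment]
  exact measurableSet_le ((continuous_sdist x).mul (continuous_sdist y)).measurable
    measurable_const

lemma ae_sdist_ne_zero {ν : Measure (Hyp n)} {p : Euc n} (hp : ν (meets {p}) = 0) :
    ∀ᵐ H ∂ν, sdist p H ≠ 0 := by
  rw [ae_iff]
  refine measure_mono_null (fun H hH => ?_) hp
  exact ⟨p, by simpa [hset, sdist, sub_eq_zero] using hH, rfl⟩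

lemma nrm_eq_ite (o : Euc n) (H : Hyp n) :
    nrm o H = if sdist o H < 0 then H.1.1 else -H.1.1 := by
  simp only [nrm, sdist, sub_neg]

lemma norm_nrm (o : Euc n) (H : Hyp n) : ‖nrm o H‖ = 1 := by
  rw [nrm]; split_ifs <;> simp [H.2]

lemma measurable_nrm (o : Euc n) : Measurable (nrm o) := by
  rw [funext (nrm_eq_ite o)]
  exact Measurable.ite (measurableSet_lt (continuous_sdist o).measurable measurable_const)
    continuous_subtype_val.fst.measurable continuous_subtype_val.fst.neg.measurable

lemma integrableOn_nrm {ν : Measure (Hyp n)} (o : Euc n) {S : Set (Hyp n)} (hS : ν S < ⊤) :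
    IntegrableOn (nrm o) S ν :=
  Measure.integrableOn_of_bounded hS.ne (measurable_nrm o).aestronglyMeasurable
    (M := 1) (ae_of_all _ fun H => (norm_nrm o H).le)

lemma indicator_nrm_sub_indicator_nrm {o x y : Euc n} {H : Hyp n} (ho : sdist o H ≠ 0)
    (hx : sdist x H ≠ 0) (hy : sdist y H ≠ 0) :
    (meets (segment ℝ o x)).indicator (nrm o) H - (meets (segment ℝ o y)).indicator (nrm o) H =
      (meets (segment ℝ x y)).indicator (nrm y) H := by
  -- A hyperplane missing `o`, `x`, `y` meets exactly one of `[o, x]`, `[o, y]` iff it separates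
  -- `x` from `y`; the surviving term `± nrm o H` is then the normal pointing away from `y`.
  simp only [indicator_apply, meets_segment, mem_ofPred_eq, nrm_eq_ite]
  rcases ho.lt_or_gt with ha | ha <;> rcases hx.lt_or_gt with hb | hb <;>
    rcases hy.lt_or_gt with hc | hc <;> split_ifs <;> first | (simp; done) | nlinarith

lemma inner_sub_nrm_of_mem_meets {x y : Euc n} {H : Hyp n} (hH : H ∈ meets (segment ℝ x y))
    (hy : sdist y H ≠ 0) : inner ℝ (x - y) (nrm y H) = |inner ℝ (x - y) H.1.1| := by
  rw [meets_segment, mem_ofPred_eq] at hH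
  have hxy : inner ℝ (x - y) H.1.1 = sdist x H - sdist y H := by
    simp only [sdist, inner_sub_left]; ring
  rw [nrm_eq_ite]
  split_ifs with hc
  · rw [hxy, abs_of_nonneg (by nlinarith)]
  · rw [inner_neg_right, hxy, abs_of_nonpos (by nlinarith [lt_of_le_of_ne (not_lt.1 hc) hy.symm])]

lemma norm_mul_sinA (v : Euc n) (H : Hyp n) : ‖v‖ * sinA v H = |inner ℝ v H.1.1| := by
  rcases eq_or_ne v 0 with rfl | hv
  · simp
  · exact mul_div_cancel₀ _ (norm_ne_zero_iff.2 hv)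

lemma fnu_sub_fnu {ν : Measure (Hyp n)} {o x y : Euc n} (ho : ν (meets {o}) = 0)
    (hx : ν (meets {x}) = 0) (hy : ν (meets {y}) = 0)
    (hox : ν (meets (segment ℝ o x)) < ⊤) (hoy : ν (meets (segment ℝ o y)) < ⊤) :
    fnu ν o x - fnu ν o y = ∫ H in meets (segment ℝ x y), nrm y H ∂ν := by
  have hA := measurableSet_meets_segment o x
  have hB := measurableSet_meets_segment o y
  rw [fnu, fnu, ← integral_indicator hA, ← integral_indicator hB,
    ← integral_indicator (measurableSet_meets_segment x y),
    ← integral_sub ((integrableOn_nrm o hox).integrable_indicator hA)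
      ((integrableOn_nrm o hoy).integrable_indicator hB)]
  refine integral_congr_ae ?_
  filter_upwards [ae_sdist_ne_zero ho, ae_sdist_ne_zero hx, ae_sdist_ne_zero hy] with H hHo hHx hHy
  exact indicator_nrm_sub_indicator_nrm hHo hHx hHy

lemma norm_setIntegral_nrm_le {ν : Measure (Hyp n)} (y : Euc n) {S : Set (Hyp n)}
    (hS : ν S < ⊤) : ‖∫ H in S, nrm y H ∂ν‖ ≤ (ν S).toReal := by
  simpa [Measure.real] using norm_setIntegral_le_of_norm_le_const hS fun H _ => (norm_nrm y H).le

lemma le_norm_setIntegral_nrm {ν : Measure (Hyp n)} {x y : Euc n} {κ : ℝ}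
    (hxy : ν (meets (segment ℝ x y)) < ⊤) (hy : ν (meets {y}) = 0)
    (htrans : κ * (ν (meets (segment ℝ x y))).toReal ≤
      ∫ H in meets (segment ℝ x y), sinA (x - y) H ∂ν) :
    κ * (ν (meets (segment ℝ x y))).toReal ≤ ‖∫ H in meets (segment ℝ x y), nrm y H ∂ν‖ := by
  rcases eq_or_ne x y with rfl | hne
  · simp only [sub_self, sinA, norm_zero, div_zero, integral_zero] at htrans
    exact htrans.trans (norm_nonneg _)
  have hpos : 0 < ‖x - y‖ := norm_pos_iff.2 (sub_ne_zero.2 hne)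
  have hinner : inner ℝ (x - y) (∫ H in meets (segment ℝ x y), nrm y H ∂ν) =
      ‖x - y‖ * ∫ H in meets (segment ℝ x y), sinA (x - y) H ∂ν := by
    rw [← integral_inner (integrableOn_nrm y hxy), ← integral_const_mul]
    refine setIntegral_congr_ae (measurableSet_meets_segment x y) ?_
    filter_upwards [ae_sdist_ne_zero hy] with H hHy hH
    rw [inner_sub_nrm_of_mem_meets hH hHy, norm_mul_sinA]
  refine le_of_mul_le_mul_left ?_ hpos
  calc ‖x - y‖ * (κ * (ν (meets (segment ℝ x y))).toReal)
      ≤ ‖x - y‖ * ∫ H in meets (segment ℝ x y), sinA (x - y) H ∂ν := by gcongr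
    _ = inner ℝ (x - y) (∫ H in meets (segment ℝ x y), nrm y H ∂ν) := hinner.symm
    _ ≤ ‖x - y‖ * ‖∫ H in meets (segment ℝ x y), nrm y H ∂ν‖ := real_inner_le_norm _ _

end

theorem stmt11_general (n : ℕ) (Ω : Set (Euc n))
    (hΩc : Convex ℝ Ω) (ν : Measure (Hyp n))
    (hpt : ∀ p ∈ Ω, ν (meets {p}) = 0)
    (hcpt : ∀ K ⊆ Ω, IsCompact K → ν (meets K) < ⊤)
    (o : Euc n) (ho : o ∈ Ω)
    (κ : ℝ)
    (htrans : ∀ x ∈ Ω, ∀ y ∈ Ω,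
      κ * (ν (meets (segment ℝ x y))).toReal ≤
        ∫ H in meets (segment ℝ x y), sinA (x - y) H ∂ν) :
    ∀ x ∈ Ω, ∀ y ∈ Ω,
      κ * (ν (meets (segment ℝ x y))).toReal ≤ ‖fnu ν o x - fnu ν o y‖ ∧
      ‖fnu ν o x - fnu ν o y‖ ≤ (ν (meets (segment ℝ x y))).toReal := by
  have hfin : ∀ p ∈ Ω, ∀ q ∈ Ω, ν (meets (segment ℝ p q)) < ⊤ := fun p hp q hq =>
    hcpt _ (hΩc.segment_subset hp hq)
      (convexHull_pair (𝕜 := ℝ) p q ▸ (toFinite {p, q}).isCompact_convexHull ℝ)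
  intro x hx y hy
  rw [fnu_sub_fnu (hpt o ho) (hpt x hx) (hpt y hy) (hfin o ho x hx) (hfin o ho y hy)]
  exact ⟨le_norm_setIntegral_nrm (hfin x hx y hy) (hpt y hy) (htrans x hx y hy),
    norm_setIntegral_nrm_le y (hfin x hx y hy)⟩

/-- if `ν` is uniformly transverse on `Ω` with constant `κ`, then `f_ν` is
bi-Lipschitz from `(Ω, d_ν)` to `ℝⁿ`: `κ d_ν(x,y) ≤ |f_ν(x) − f_ν(y)| ≤ d_ν(x,y)`. -/
theorem stmt11 (n : ℕ) (hn : 2 ≤ n) (Ω : Set (Euc n)) (hΩo : IsOpen Ω) (hΩne : Ω.Nonempty)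
    (hΩc : Convex ℝ Ω) (ν : Measure (Hyp n))
    (hpt : ∀ p ∈ Ω, ν (meets {p}) = 0)
    (hseg : ∀ x ∈ Ω, ∀ y ∈ Ω, x ≠ y → 0 < ν (meets (segment ℝ x y)))
    (hcpt : ∀ K ⊆ Ω, IsCompact K → ν (meets K) < ⊤)
    (o : Euc n) (ho : o ∈ Ω)
    (κ : ℝ) (hκ : 0 < κ)
    (htrans : ∀ x ∈ Ω, ∀ y ∈ Ω,
      κ * (ν (meets (segment ℝ x y))).toReal ≤
        ∫ H in meets (segment ℝ x y), sinA (x - y) H ∂ν) :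
    ∀ x ∈ Ω, ∀ y ∈ Ω,
      κ * (ν (meets (segment ℝ x y))).toReal ≤ ‖fnu ν o x - fnu ν o y‖ ∧
      ‖fnu ν o x - fnu ν o y‖ ≤ (ν (meets (segment ℝ x y))).toReal :=
  stmt11_general n Ω hΩc ν hpt hcpt o ho κ htrans
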